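/- For any two vectors z, z* ∈ ℂⁿ with unit-modulus entries, the loss ℓ(z, z*) = min_{|a|=1} ∑_j |z_j a - z*_j|² satisfies the two-sided bound n·ℓ(z, z*) ≤ ‖z z^H - z* (z*)^H‖_F² ≤ 2n·ℓ(z, z*). -/

import Mathlib

/-!
Both sides are functions of `‖c‖` for `c = ∑ⱼ zⱼ conj z*ⱼ`: with unit-modulus entries,
`ℓ = 2n - 2‖c‖` (the optimal phase aligns `a c` with the positive real axis) and
`‖z zᴴ - z* z*ᴴ‖_F² = 2n² - 2‖c‖²`. Writing `x = ‖c‖ ∈ [0, n]`, the two inequalities become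
`x² ≤ n x` and `0 ≤ 2 (n - x)²`.
-/

open Finset ComplexConjugate

/-- The phase synchronization loss `ℓ(z, z*) = min_{|a|=1} ∑_j |z_j a - z*_j|²`. -/
noncomputable def loss {n : ℕ} (z zs : Fin n → ℂ) : ℝ :=
  sInf {s : ℝ | ∃ a : ℂ, ‖a‖ = 1 ∧ s = ∑ j, ‖z j * a - zs j‖ ^ 2}

namespace Complex

theorem norm_sub_sq_of_norm_eq_one {u v : ℂ} (hu : ‖u‖ = 1) (hv : ‖v‖ = 1) :
    ‖u - v‖ ^ 2 = 2 - 2 * (u * conj v).re := by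
  rw [Complex.sq_norm, normSq_sub, ← Complex.sq_norm, ← Complex.sq_norm, hu, hv]
  ring

theorem exists_norm_eq_one_mul_eq_norm (c : ℂ) : ∃ a : ℂ, ‖a‖ = 1 ∧ a * c = ‖c‖ := by
  refine ⟨exp (↑(-c.arg) * I), norm_exp_ofReal_mul_I _, ?_⟩
  calc exp (↑(-c.arg) * I) * c = exp (↑(-c.arg) * I) * (‖c‖ * exp (c.arg * I)) := by
        rw [norm_mul_exp_arg_mul_I]
    _ = ‖c‖ := by
        rw [mul_left_comm, ← exp_add, ofReal_neg, neg_mul, neg_add_cancel, exp_zero, mul_one]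

end Complex

open Complex

section UnitEntries

variable {ι : Type*} [Fintype ι] {z zs : ι → ℂ}

theorem sum_norm_mul_sub_sq (hz : ∀ j, ‖z j‖ = 1) (hzs : ∀ j, ‖zs j‖ = 1) {a : ℂ}
    (ha : ‖a‖ = 1) :
    ∑ j, ‖z j * a - zs j‖ ^ 2 = 2 * Fintype.card ι - 2 * (a * ∑ j, z j * conj (zs j)).re := by
  have hterm : ∀ j, ‖z j * a - zs j‖ ^ 2 = 2 - 2 * (a * (z j * conj (zs j))).re := by
    intro j
    rw [norm_sub_sq_of_norm_eq_one (by rw [norm_mul, hz, ha, one_mul]) (hzs j)]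
    ring_nf
  simp only [hterm, sum_sub_distrib, mul_sum, re_sum, sum_const, card_univ, nsmul_eq_mul]
  ring

theorem sum_sum_norm_mul_conj_sub_sq (hz : ∀ j, ‖z j‖ = 1) (hzs : ∀ j, ‖zs j‖ = 1) :
    ∑ j, ∑ k, ‖z j * conj (z k) - zs j * conj (zs k)‖ ^ 2
      = 2 * (Fintype.card ι : ℝ) ^ 2 - 2 * ‖∑ j, z j * conj (zs j)‖ ^ 2 := by
  set t : ι → ℂ := fun j => z j * conj (zs j)
  have hterm : ∀ j k, ‖z j * conj (z k) - zs j * conj (zs k)‖ ^ 2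
      = 2 - 2 * (t j * conj (t k)).re := by
    intro j k
    rw [norm_sub_sq_of_norm_eq_one (by simp [hz]) (by simp [hzs])]
    simp only [t, map_mul, conj_conj]
    ring_nf
  have hgram : ∑ j, ∑ k, (t j * conj (t k)).re = ‖∑ j, t j‖ ^ 2 := by
    rw [← normSq_eq_norm_sq, ← ofReal_re (normSq _), ← mul_conj, map_sum, sum_mul_sum]
    simp only [re_sum]
  simp only [hterm, sum_sub_distrib, ← mul_sum, sum_const, card_univ, nsmul_eq_mul]
  rw [hgram]
  ring

theorem norm_sum_mul_conj_le_card (hz : ∀ j, ‖z j‖ = 1) (hzs : ∀ j, ‖zs j‖ = 1) :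
    ‖∑ j, z j * conj (zs j)‖ ≤ Fintype.card ι :=
  (norm_sum_le _ _).trans_eq (by simp [hz, hzs])

end UnitEntries

theorem loss_eq {n : ℕ} {z zs : Fin n → ℂ} (hz : ∀ j, ‖z j‖ = 1) (hzs : ∀ j, ‖zs j‖ = 1) :
    loss z zs = 2 * n - 2 * ‖∑ j, z j * conj (zs j)‖ := by
  set c := ∑ j, z j * conj (zs j)
  refine IsLeast.csInf_eq ⟨?_, ?_⟩
  · obtain ⟨a, ha, hac⟩ := exists_norm_eq_one_mul_eq_norm c
    refine ⟨a, ha, ?_⟩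
    rw [sum_norm_mul_sub_sq hz hzs ha, hac, ofReal_re, Fintype.card_fin]
  · rintro s ⟨a, ha, rfl⟩
    rw [sum_norm_mul_sub_sq hz hzs ha, Fintype.card_fin]
    have : (a * c).re ≤ ‖c‖ := (re_le_norm _).trans_eq (by rw [norm_mul, ha, one_mul])
    linarith

theorem stmt_7_general (n : ℕ) (z zs : Fin n → ℂ)
    (hz : ∀ j, ‖z j‖ = 1) (hzs : ∀ j, ‖zs j‖ = 1) :
    (n : ℝ) * loss z zs
        ≤ ∑ j, ∑ k, ‖z j * (starRingEnd ℂ) (z k)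
            - zs j * (starRingEnd ℂ) (zs k)‖ ^ 2 ∧
    ∑ j, ∑ k, ‖z j * (starRingEnd ℂ) (z k)
        - zs j * (starRingEnd ℂ) (zs k)‖ ^ 2 ≤ 2 * n * loss z zs := by
  set x := ‖∑ j, z j * conj (zs j)‖
  have hx_le : x ≤ n := by simpa using norm_sum_mul_conj_le_card hz hzs
  have hx_sq : x ^ 2 ≤ n * x := by nlinarith [norm_nonneg (∑ j, z j * conj (zs j))]
  rw [loss_eq hz hzs, sum_sum_norm_mul_conj_sub_sq hz hzs, Fintype.card_fin]
  constructor <;> nlinarith [sq_nonneg ((n : ℝ) - x)]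

theorem stmt_7 (n : ℕ) (hn : 0 < n) (z zs : Fin n → ℂ)
    (hz : ∀ j, ‖z j‖ = 1) (hzs : ∀ j, ‖zs j‖ = 1) :
    (n : ℝ) * loss z zs
        ≤ ∑ j, ∑ k, ‖z j * (starRingEnd ℂ) (z k)
            - zs j * (starRingEnd ℂ) (zs k)‖ ^ 2 ∧
    ∑ j, ∑ k, ‖z j * (starRingEnd ℂ) (z k)
        - zs j * (starRingEnd ℂ) (zs k)‖ ^ 2 ≤ 2 * n * loss z zs :=
  stmt_7_general n z zs hz hzs
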